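/- Let i ∈ {1,…,N−1} with λ^{(i)} ≥ 1 and λ_{i+1} ≥ 1, and let s = s_{λ^{(i)}, λ^{(i)}+1} ∈ S_n be the transposition exchanging λ^{(i)} and λ^{(i)}+1. Then W°_{s(I^min)}(t; z) = Σ_{j=1}^{λ^{(i)}} ( t^{(i)}_j − z_j ). -/

import Mathlib

/-!
Common setup.  Fix integers `N ≥ 1`, `n ≥ 1` and `λ = (λ_1,…,λ_N) ∈ ℤ_{≥0}^N` with
`λ_1 + ⋯ + λ_N = n` (encoded as `lam : Fin N → ℕ`, 0-indexed).  Positions in `{1,…,n}` are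
encoded as elements of `Fin n` (0-indexed) and block indices in `{1,…,N}` as elements of
`Fin N` (0-indexed).  An element `I = (I_1,…,I_N) ∈ 𝓘_λ` is encoded as a function
`I : Fin N → Finset (Fin n)` satisfying `IsLamPartition`.

The variables `t^{(j)}_a` (`j = 1,…,N−1` the paper's 1-indexed group, `a` 0-indexed within the
group) are encoded as a function `t : ℕ → ℕ → ℂ`; the convention `t^{(N)}_a = z_a` is realized
by `TT`.  The weight functions `W_I`, `W°_I` are realized as functions of the complex variables
(the symmetrizations `W`, `Wcirc` of `Ufun`, `Ucirc`); an identity of polynomials is stated as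
the corresponding identity of these functions at all points where the (cancelling) denominators
do not vanish, which determines the polynomials uniquely.
-/

open scoped Classical

noncomputable section

/-- `λ^{(j)} = λ_1 + ⋯ + λ_j` for `j : ℕ` (so `Lam N lam 0 = 0`, `Lam N lam N = n`). -/
def Lam (N : ℕ) (lam : Fin N → ℕ) (j : ℕ) : ℕ :=
  ∑ k ∈ Finset.univ.filter (fun k : Fin N => (k : ℕ) < j), lam k

/-- `I_1 ∪ ⋯ ∪ I_j` for `j : ℕ` (paper's 1-indexed `j`). -/
def cupI (N n : ℕ) (I : Fin N → Finset (Fin n)) (j : ℕ) : Finset (Fin n) :=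
  (Finset.univ.filter (fun k : Fin N => (k : ℕ) < j)).biUnion I

/-- `i^{(j)}_{a+1}`: the `(a+1)`-th smallest element of `I_1 ∪ ⋯ ∪ I_j`, as a natural number. -/
def idx (N n : ℕ) (I : Fin N → Finset (Fin n)) (j a : ℕ) : ℕ :=
  (((cupI N n I j).sort (· ≤ ·)).map Fin.val).getD a 0

/-- `z_{a+1}` for a natural-number index `a` (junk `0` out of range). -/
def zf (n : ℕ) (z : Fin n → ℂ) (a : ℕ) : ℂ := if h : a < n then z ⟨a, h⟩ else 0

/-- `TT N n t z j a = t^{(j)}_{a+1}` for `j ≤ N−1`, and `= z_{a+1}` for `j = N`. -/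
def TT (N n : ℕ) (t : ℕ → ℕ → ℂ) (z : Fin n → ℂ) (j a : ℕ) : ℂ :=
  if j = N then zf n z a else t j a

/-- `I = (I_1,…,I_N)` is a member of `𝓘_λ`: the `I_j` are pairwise disjoint with union
`{1,…,n}` and `|I_j| = λ_j`. -/
def IsLamPartition (N n : ℕ) (lam : Fin N → ℕ) (I : Fin N → Finset (Fin n)) : Prop :=
  (∀ j, (I j).card = lam j) ∧ ∀ a : Fin n, ∃! j, a ∈ I j

/-- The (finite) set `𝓘_λ`. -/
def partSet (N n : ℕ) (lam : Fin N → ℕ) : Finset (Fin N → Finset (Fin n)) :=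
  Finset.univ.filter fun I => IsLamPartition N n lam I

/-- `I^min ∈ 𝓘_λ`, `I^min_j = {λ^{(j−1)}+1, …, λ^{(j)}}`. -/
def IminF (N n : ℕ) (lam : Fin N → ℕ) : Fin N → Finset (Fin n) := fun j =>
  Finset.univ.filter fun a : Fin n =>
    Lam N lam (j : ℕ) ≤ (a : ℕ) ∧ (a : ℕ) < Lam N lam ((j : ℕ) + 1)

/-- `|σ_I| = #{(a,b) : a ∈ I_i, b ∈ I_j, a < b, i > j}`. -/
def lenI (N n : ℕ) (I : Fin N → Finset (Fin n)) : ℕ :=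
  ((Finset.univ : Finset (Fin n × Fin n)).filter fun p =>
    ∃ i j : Fin N, j < i ∧ p.1 ∈ I i ∧ p.2 ∈ I j ∧ p.1 < p.2).card

/-- The Coxeter length (number of inversions) of a permutation of `{1,…,n}`. -/
def invCount (n : ℕ) (σ : Equiv.Perm (Fin n)) : ℕ :=
  ((Finset.univ : Finset (Fin n × Fin n)).filter fun p =>
    p.1 < p.2 ∧ σ p.2 < σ p.1).card

/-- `σ = σ_I`: `σ` maps, for each `j`, the `k`-th smallest element of `I^min_j` to the `k`-th
smallest element of `I_j`; equivalently `σ(I^min_j) = I_j` and `σ` is increasing on each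
`I^min_j`. -/
def IsSigmaI (N n : ℕ) (lam : Fin N → ℕ) (I : Fin N → Finset (Fin n))
    (σ : Equiv.Perm (Fin n)) : Prop :=
  (∀ j, (IminF N n lam j).image σ = I j) ∧
    ∀ j, ∀ a ∈ IminF N n lam j, ∀ b ∈ IminF N n lam j, a < b → σ a < σ b

/-- `σ(I) = (σ(I_1),…,σ(I_N))`. -/
def sTuple (N n : ℕ) (σ : Equiv.Perm (Fin n)) (I : Fin N → Finset (Fin n)) :
    Fin N → Finset (Fin n) := fun m => (I m).image σ

/-- The function `U_I(t;z;h)`. -/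
def Ufun (N n : ℕ) (lam : Fin N → ℕ) (I : Fin N → Finset (Fin n))
    (t : ℕ → ℕ → ℂ) (z : Fin n → ℂ) (h : ℂ) : ℂ :=
  ∏ j ∈ Finset.Icc 1 (N - 1), ∏ a ∈ Finset.range (Lam N lam j),
    ((∏ c ∈ Finset.range (Lam N lam (j + 1)),
        ((if idx N n I (j + 1) c < idx N n I j a then
            TT N n t z j a - TT N n t z (j + 1) c else 1) *
          (if idx N n I j a < idx N n I (j + 1) c then
            TT N n t z j a - TT N n t z (j + 1) c - h else 1))) *
      ∏ b ∈ Finset.range (Lam N lam j),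
        (if a < b then
          (TT N n t z j b - TT N n t z j a - h) / (TT N n t z j b - TT N n t z j a) else 1))

/-- The function `U°_I(t;z)`. -/
def Ucirc (N n : ℕ) (lam : Fin N → ℕ) (I : Fin N → Finset (Fin n))
    (t : ℕ → ℕ → ℂ) (z : Fin n → ℂ) : ℂ :=
  ∏ j ∈ Finset.Icc 1 (N - 1), ∏ a ∈ Finset.range (Lam N lam j),
    ((∏ c ∈ Finset.range (Lam N lam (j + 1)),
        (if idx N n I (j + 1) c < idx N n I j a then
          TT N n t z j a - TT N n t z (j + 1) c else 1)) *
      ∏ b ∈ Finset.range (Lam N lam j),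
        (if a < b then 1 / (TT N n t z j b - TT N n t z j a) else 1))

/-- The symmetrization group `S_{λ^{(1)}} × ⋯ × S_{λ^{(N−1)}}`: the component `σ k` permutes
the index set `{0,…,λ^{(k+1)}−1}` of the variables of the group `k+1` (paper's 1-indexing),
and the unused component (`k+1 = N`) is the identity. -/
def symSet (N n : ℕ) (lam : Fin N → ℕ) : Finset (Fin N → Equiv.Perm (Fin n)) :=
  Finset.univ.filter fun σ => ∀ k : Fin N, ∀ a : Fin n,
    ((k : ℕ) + 1 = N ∨ Lam N lam ((k : ℕ) + 1) ≤ (a : ℕ)) → σ k a = a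

/-- `t` with the variables of the group `j` (for `1 ≤ j ≤ N−1`) permuted by `σ ⟨j−1⟩`. -/
def permT (N n : ℕ) (σ : Fin N → Equiv.Perm (Fin n)) (t : ℕ → ℕ → ℂ) : ℕ → ℕ → ℂ :=
  fun j a =>
    if h : 1 ≤ j ∧ j ≤ N - 1 ∧ a < n then
      t j ((σ ⟨j - 1, by omega⟩ ⟨a, by omega⟩ : Fin n) : ℕ)
    else t j a

/-- The weight function `W_I(t;z;h)` (as a function of the complex variables). -/
def W (N n : ℕ) (lam : Fin N → ℕ) (I : Fin N → Finset (Fin n))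
    (t : ℕ → ℕ → ℂ) (z : Fin n → ℂ) (h : ℂ) : ℂ :=
  ∑ σ ∈ symSet N n lam, Ufun N n lam I (permT N n σ t) z h

/-- The limiting weight function `W°_I(t;z)` (as a function of the complex variables). -/
def Wcirc (N n : ℕ) (lam : Fin N → ℕ) (I : Fin N → Finset (Fin n))
    (t : ℕ → ℕ → ℂ) (z : Fin n → ℂ) : ℂ :=
  ∑ σ ∈ symSet N n lam, Ucirc N n lam I (permT N n σ t) z

/-- `W̌_I(t;z;h) = W_{σ0(I)}(t; z_n,…,z_1; h)`. -/
def Wcheck (N n : ℕ) (lam : Fin N → ℕ) (I : Fin N → Finset (Fin n))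
    (t : ℕ → ℕ → ℂ) (z : Fin n → ℂ) (h : ℂ) : ℂ :=
  W N n lam (fun j => (I j).image Fin.rev) t (fun a => z a.rev) h

/-- `W̌°_I(t;z) = W°_{σ0(I)}(t; z_n,…,z_1)`. -/
def WcheckCirc (N n : ℕ) (lam : Fin N → ℕ) (I : Fin N → Finset (Fin n))
    (t : ℕ → ℕ → ℂ) (z : Fin n → ℂ) : ℂ :=
  Wcirc N n lam (fun j => (I j).image Fin.rev) t (fun a => z a.rev)

/-- The substitution `t = Σ_I`, i.e. `t^{(k)}_a = z_{i^{(k)}_a}`. -/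
def SigT (N n : ℕ) (I : Fin N → Finset (Fin n)) (z : Fin n → ℂ) : ℕ → ℕ → ℂ :=
  fun j a => zf n z (idx N n I j a)

/-- `c_λ(t;h)`. -/
def clam (N n : ℕ) (lam : Fin N → ℕ) (t : ℕ → ℕ → ℂ) (h : ℂ) : ℂ :=
  ∏ i ∈ Finset.Icc 1 (N - 1), ∏ a ∈ Finset.range (Lam N lam i),
    ∏ b ∈ Finset.range (Lam N lam i), if b ≠ a then t i a - t i b - h else 1

/-- `R_λ(z)`. -/
def Rlam (N n : ℕ) (lam : Fin N → ℕ) (z : Fin n → ℂ) : ℂ :=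
  ∏ i ∈ Finset.Icc 1 (N - 1), ∏ a ∈ Finset.range (Lam N lam i),
    ∏ b ∈ Finset.Ico (Lam N lam i) (Lam N lam (i + 1)), (zf n z a - zf n z b)

/-- `Q_λ(z;h)`. -/
def Qlam (N n : ℕ) (lam : Fin N → ℕ) (z : Fin n → ℂ) (h : ℂ) : ℂ :=
  ∏ i ∈ Finset.Icc 1 (N - 1), ∏ a ∈ Finset.range (Lam N lam i),
    ∏ b ∈ Finset.Ico (Lam N lam i) (Lam N lam (i + 1)), (zf n z a - zf n z b - h)

/-- `V_λ(x;y) = ∏_{i<j} ∏_{a ∈ I^min_i} ∏_{b ∈ I^min_j} (x_a − y_b)`. -/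
def Vlam (N n : ℕ) (lam : Fin N → ℕ) (x y : Fin n → ℂ) : ℂ :=
  ∏ i : Fin N, ∏ j : Fin N,
    if i < j then ∏ a ∈ IminF N n lam i, ∏ b ∈ IminF N n lam j, (x a - y b) else 1

/-- The values of the `t`-variables are pairwise distinct within each group (so that the
cancelling denominators of the weight functions do not vanish). -/
def tDistinct (N n : ℕ) (lam : Fin N → ℕ) (t : ℕ → ℕ → ℂ) : Prop :=
  ∀ j, 1 ≤ j → j ≤ N - 1 → ∀ a b, a < Lam N lam j → b < Lam N lam j → a ≠ b → t j a ≠ t j b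

/-- `M = {min(a,b)+1, …, max(a,b)−1}`. -/
def Mset (n : ℕ) (a b : Fin n) : Finset (Fin n) :=
  Finset.univ.filter fun c => min a b < c ∧ c < max a b

/-- `r_{a,b,I} = |M ∩ I_i| + |M ∩ I_j| + 2|M ∩ (I_{k+1} ∪ ⋯ ∪ I_{l−1})|`,
`k = min(i,j)`, `l = max(i,j)`. -/
def rab (N n : ℕ) (I : Fin N → Finset (Fin n)) (a b : Fin n) (i j : Fin N) : ℕ :=
  (Mset n a b ∩ I i).card + (Mset n a b ∩ I j).card +
    2 * (Mset n a b ∩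
      ((Finset.univ.filter fun k : Fin N => min i j < k ∧ k < max i j)).biUnion I).card

/-- `I_{[a,b]} = I_k ∪ I_{k+1} ∪ ⋯ ∪ I_l`, `k = min(i,j)`, `l = max(i,j)`. -/
def Iab (N n : ℕ) (I : Fin N → Finset (Fin n)) (i j : Fin N) : Finset (Fin n) :=
  ((Finset.univ.filter fun k : Fin N => min i j ≤ k ∧ k ≤ max i j)).biUnion I

/-- `λ_r` for a natural-number index `r` (1-indexed `r+1`; junk `0` out of range). -/
def lamN (N : ℕ) (lam : Fin N → ℕ) (r : ℕ) : ℕ := if h : r < N then lam ⟨r, h⟩ else 0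

/-- `m_{a,b,I} = Σ_{r=k}^{l−1} (λ_r + λ_{r+1})`, `k = min(i,j)`, `l = max(i,j)`. -/
def mab (N : ℕ) (lam : Fin N → ℕ) (i j : Fin N) : ℕ :=
  ∑ r ∈ Finset.Ico (min (i : ℕ) (j : ℕ)) (max (i : ℕ) (j : ℕ)),
    (lamN N lam r + lamN N lam (r + 1))

noncomputable section CoreDet

variable {M : ℕ} (w : Fin M → ℂ) (y : ℕ → ℂ)

def Vd : ℂ := ∏ a : Fin M, ∏ b ∈ Finset.Ioi a, (w b - w a)

def Pc (c : ℕ) : Polynomial ℂ := ∏ cc ∈ Finset.range c, (Polynomial.X - Polynomial.C (y cc))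

def MatP : Matrix (Fin M) (Fin M) ℂ := Matrix.of fun r c => (Pc y (c : ℕ)).eval (w r)

lemma Pc_monic (c : ℕ) : (Pc y c).Monic :=
  Polynomial.monic_prod_of_monic _ _ fun _ _ => Polynomial.monic_X_sub_C _

lemma Pc_natDegree (c : ℕ) : (Pc y c).natDegree = c := by
  rw [Pc, Polynomial.natDegree_prod_of_monic _ _ fun _ _ => Polynomial.monic_X_sub_C _]
  simp [Polynomial.natDegree_X_sub_C]

lemma detMatP : (MatP w y).det = Vd w := by
  rw [MatP, ← Matrix.det_eval_matrixOfPolynomials_eq_det_vandermonde w (fun c : Fin M => Pc y c)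
      (fun c => Pc_natDegree y c) (fun c => Pc_monic y c), Matrix.det_vandermonde, Vd]

lemma Pc_succ (c : ℕ) : Pc y (c + 1) = Pc y c * (Polynomial.X - Polynomial.C (y c)) := by
  rw [Pc, Finset.prod_range_succ, Pc]

lemma sgn_cast_mul_self (σ : Equiv.Perm (Fin M)) :
    ((Equiv.Perm.sign σ : ℤ) : ℂ) * ((Equiv.Perm.sign σ : ℤ) : ℂ) = 1 := by
  rcases Int.units_eq_one_or (Equiv.Perm.sign σ) with h | h <;> simp [h]

lemma sgn_inv (σ : Equiv.Perm (Fin M)) :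
    (((Equiv.Perm.sign σ : ℤ) : ℂ))⁻¹ = ((Equiv.Perm.sign σ : ℤ) : ℂ) := by
  rcases Int.units_eq_one_or (Equiv.Perm.sign σ) with h | h <;> norm_num [h]

lemma vand_perm (σ : Equiv.Perm (Fin M)) :
    ∏ a : Fin M, ∏ b ∈ Finset.Ioi a, (w (σ b) - w (σ a)) =
      ((Equiv.Perm.sign σ : ℤ) : ℂ) * Vd w := by
  have h1 : (Matrix.vandermonde (w ∘ σ)) = (Matrix.vandermonde w).submatrix σ id := by
    ext i j; simp [Matrix.vandermonde]
  have h2 := Matrix.det_permute σ (Matrix.vandermonde w)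
  rw [← h1] at h2
  have h3 := Matrix.det_vandermonde (w ∘ σ)
  rw [h2, Matrix.det_vandermonde] at h3
  rw [Vd]
  simpa [Function.comp] using h3.symm

/-- The basic summand. -/
def bs (σ : Equiv.Perm (Fin M)) : ℂ :=
  ∏ a : Fin M, ((Pc y (a : ℕ)).eval (w (σ a)) *
    ∏ b : Fin M, if a < b then (w (σ b) - w (σ a))⁻¹ else 1)

lemma bs_eq (σ : Equiv.Perm (Fin M)) :
    bs w y σ = ((Equiv.Perm.sign σ : ℤ) : ℂ) * (∏ a : Fin M, MatP w y (σ a) a) * (Vd w)⁻¹ := by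
  rw [bs, Finset.prod_mul_distrib]
  have h1 : ∀ a : Fin M, (∏ b : Fin M, if a < b then (w (σ b) - w (σ a))⁻¹ else 1) =
      (∏ b ∈ Finset.Ioi a, (w (σ b) - w (σ a)))⁻¹ := by
    intro a
    rw [← Finset.prod_inv_distrib]
    have h2 : Finset.Ioi a = Finset.univ.filter (fun b => a < b) := by
      ext b; simp
    rw [h2, Finset.prod_filter]
  rw [Finset.prod_congr rfl fun a _ => h1 a, Finset.prod_inv_distrib, vand_perm w σ, mul_inv,
    sgn_inv]
  have h4 : ∏ x : Fin M, (Pc y (x : ℕ)).eval (w (σ x)) = ∏ a : Fin M, MatP w y (σ a) a := rfl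
  rw [h4]; ring


lemma prod_update (σ : Equiv.Perm (Fin M)) (c : Fin M) (h : Fin M → ℂ) :
    ∏ a : Fin M, ((MatP w y).updateCol c (fun r => h r * MatP w y r c)) (σ a) a =
      h (σ c) * ∏ a : Fin M, MatP w y (σ a) a := by
  have h1 : ∀ a : Fin M, ((MatP w y).updateCol c (fun r => h r * MatP w y r c)) (σ a) a =
      (if a = c then h (σ a) else 1) * MatP w y (σ a) a := by
    intro a
    rw [Matrix.updateCol_apply]
    by_cases hac : a = c <;> simp [hac]
  rw [Finset.prod_congr rfl fun a _ => h1 a, Finset.prod_mul_distrib, Finset.prod_ite_eq' _ c]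
  simp

lemma det_update_mul (c : Fin M) (h : Fin M → ℂ) :
    ((MatP w y).updateCol c (fun r => h r * MatP w y r c)).det =
      ∑ σ : Equiv.Perm (Fin M), ((Equiv.Perm.sign σ : ℤ) : ℂ) *
        (h (σ c) * ∏ a : Fin M, MatP w y (σ a) a) := by
  rw [Matrix.det_apply']
  exact Finset.sum_congr rfl fun σ _ => by rw [prod_update]

lemma detX (c : Fin M) (hc : (c : ℕ) + 1 < M) :
    ((MatP w y).updateCol c (fun r => w r * MatP w y r c)).det = y c * Vd w := by
  have hcol : (fun r => w r * MatP w y r c) =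
      (fun r => (Pc y ((c : ℕ) + 1)).eval (w r)) + (y c) • (fun r => MatP w y r c) := by
    funext r
    simp only [Pi.add_apply, Pi.smul_apply, smul_eq_mul, Pc_succ, Polynomial.eval_mul,
      Polynomial.eval_sub, Polynomial.eval_X, Polynomial.eval_C, MatP, Matrix.of_apply]
    ring
  rw [hcol, Matrix.det_updateCol_add, Matrix.det_updateCol_smul,
    Matrix.updateCol_eq_self, detMatP]
  have hzero : ((MatP w y).updateCol c fun r => (Pc y ((c : ℕ) + 1)).eval (w r)).det = 0 := by
    refine Matrix.det_zero_of_column_eq (i := c) (j := (⟨(c : ℕ) + 1, hc⟩ : Fin M)) ?_ ?_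
    · intro h; exact absurd (congrArg Fin.val h) (by simp)
    · intro k
      rw [Matrix.updateCol_self,
        Matrix.updateCol_ne (by intro h; exact absurd (congrArg Fin.val h) (by simp))]
      rfl
  rw [hzero]; ring

lemma sum_bs_mul (c : Fin M) (h : Fin M → ℂ) :
    ∑ σ : Equiv.Perm (Fin M), bs w y σ * h (σ c) =
      (Vd w)⁻¹ * ((MatP w y).updateCol c (fun r => h r * MatP w y r c)).det := by
  rw [det_update_mul, Finset.mul_sum]
  exact Finset.sum_congr rfl fun σ _ => by rw [bs_eq]; ring

lemma sum_bs (hV : Vd w ≠ 0) : ∑ σ : Equiv.Perm (Fin M), bs w y σ = 1 := by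
  have : ∑ σ : Equiv.Perm (Fin M), bs w y σ = (Vd w)⁻¹ * (MatP w y).det := by
    rw [Matrix.det_apply', Finset.mul_sum]
    exact Finset.sum_congr rfl fun σ _ => by rw [bs_eq]; ring
  rw [this, detMatP, inv_mul_cancel₀ hV]

lemma coreB' (hV : Vd w ≠ 0) (c : Fin M) (hc : (c : ℕ) + 1 < M) :
    ∑ σ : Equiv.Perm (Fin M), bs w y σ * w (σ c) = y c := by
  rw [sum_bs_mul, detX w y c hc]
  field_simp


lemma sumEc :
    ∑ c : Fin M, ((MatP w y).updateCol c (fun r => w r * MatP w y r c)).det =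
      (∑ a : Fin M, w a) * (MatP w y).det := by
  rw [Finset.sum_congr rfl fun c (_ : c ∈ Finset.univ) => det_update_mul w y c w,
    Finset.sum_comm, Matrix.det_apply', Finset.mul_sum]
  refine Finset.sum_congr rfl fun σ _ => ?_
  rw [← Finset.mul_sum, ← Finset.sum_mul, Equiv.sum_comp σ w]
  ring


lemma coreD' (hV : Vd w ≠ 0) (hM : 0 < M) :
    ∑ σ : Equiv.Perm (Fin M), bs w y σ * (w (σ ⟨M - 1, by omega⟩) - y (M - 1)) =
      (∑ a : Fin M, w a) - ∑ c ∈ Finset.range M, y c := by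
  have hM1 : M - 1 + 1 = M := by omega
  set lst : Fin M := ⟨M - 1, by omega⟩ with hlst
  have hsplit : ∀ σ : Equiv.Perm (Fin M), bs w y σ * (w (σ lst) - y (M - 1)) =
      bs w y σ * w (σ lst) - y (M - 1) * bs w y σ := fun σ => by ring
  rw [Finset.sum_congr rfl fun σ _ => hsplit σ, Finset.sum_sub_distrib, ← Finset.mul_sum,
    sum_bs w y hV, sum_bs_mul]
  have hE : ((MatP w y).updateCol lst fun r => w r * MatP w y r lst).det =
      (∑ a : Fin M, w a) * Vd w - (∑ c ∈ Finset.range (M - 1), y c) * Vd w := by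
    have h1 := sumEc w y
    rw [← Finset.add_sum_erase _ _ (Finset.mem_univ lst)] at h1
    have h2 : ∑ c ∈ Finset.univ.erase lst,
        ((MatP w y).updateCol c fun r => w r * MatP w y r c).det =
        ∑ c ∈ Finset.univ.erase lst, y (c : ℕ) * Vd w := by
      refine Finset.sum_congr rfl fun c hc => ?_
      have hcm : (c : ℕ) + 1 < M := by
        have h3 := Finset.mem_erase.mp hc
        have hcv : (c : ℕ) ≠ M - 1 := by
          intro h
          exact h3.1 (Fin.ext (by simp [hlst, h]))
        have := c.2; omega
      exact detX w y c hcm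
    rw [h2, Finset.sum_erase_eq_sub (Finset.mem_univ lst), ← Finset.sum_mul] at h1
    have h4 : ∑ c : Fin M, y (c : ℕ) = ∑ c ∈ Finset.range M, y c :=
      Fin.sum_univ_eq_sum_range _ _
    have h5 : ∑ c ∈ Finset.range M, y c = ∑ c ∈ Finset.range (M - 1), y c + y (M - 1) := by
      conv_lhs => rw [← hM1]
      rw [Finset.sum_range_succ]
    have h6 : y (lst : ℕ) = y (M - 1) := rfl
    rw [detMatP] at h1
    rw [h4, h5, h6] at h1
    linear_combination h1
  rw [hE]
  field_simp
  have h5 : ∑ c ∈ Finset.range M, y c = ∑ c ∈ Finset.range (M - 1), y c + y (M - 1) := by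
    conv_lhs => rw [← hM1]
    rw [Finset.sum_range_succ]
  rw [h5]
  ring

end CoreDet

noncomputable section Transport

/-- `π` applied to a natural number index (junk outside `range n`). -/
def pxf (n : ℕ) (π : Equiv.Perm (Fin n)) (a : ℕ) : ℕ :=
  if h : a < n then ((π ⟨a, h⟩ : Fin n) : ℕ) else a

/-- Permutations of `Fin n` supported on `{0, …, M-1}`. -/
def QMset (n M : ℕ) : Finset (Equiv.Perm (Fin n)) :=
  Finset.univ.filter fun π => ∀ a : Fin n, M ≤ (a : ℕ) → π a = a

/-- The one-group factor, at the `Perm (Fin n)` level. -/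
def baseQ (n M K : ℕ) (x y : ℕ → ℂ) (π : Equiv.Perm (Fin n)) : ℂ :=
  ∏ a ∈ Finset.range M,
    ((∏ c ∈ Finset.range K, if c < a then (x (pxf n π a) - y c) else 1) *
      ∏ b ∈ Finset.range M, if a < b then (x (pxf n π b) - x (pxf n π a))⁻¹ else 1)

variable {n M K : ℕ}

/-- `Fin M` as the subtype of small elements of `Fin n`. -/
def eMn (hMn : M ≤ n) : Fin M ≃ {a : Fin n // (a : ℕ) < M} where
  toFun k := ⟨⟨(k : ℕ), lt_of_lt_of_le k.2 hMn⟩, k.2⟩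
  invFun s := ⟨((s : Fin n) : ℕ), s.2⟩
  left_inv k := rfl
  right_inv s := rfl

/-- Extend a permutation of `Fin M` to `Fin n`. -/
def extM (hMn : M ≤ n) (σ : Equiv.Perm (Fin M)) : Equiv.Perm (Fin n) :=
  σ.extendDomain (eMn hMn)

lemma extM_apply_lt (hMn : M ≤ n) (σ : Equiv.Perm (Fin M)) (a : Fin n) (ha : (a : ℕ) < M) :
    extM hMn σ a = ⟨((σ ⟨(a : ℕ), ha⟩ : Fin M) : ℕ), lt_of_lt_of_le (σ ⟨(a : ℕ), ha⟩).2 hMn⟩ := by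
  exact Equiv.Perm.extendDomain_apply_subtype σ (eMn hMn) ha

lemma extM_apply_ge (hMn : M ≤ n) (σ : Equiv.Perm (Fin M)) (a : Fin n) (ha : M ≤ (a : ℕ)) :
    extM hMn σ a = a := by
  exact Equiv.Perm.extendDomain_apply_not_subtype σ (eMn hMn) (by omega)

lemma extM_mem (hMn : M ≤ n) (σ : Equiv.Perm (Fin M)) : extM hMn σ ∈ QMset n M := by
  refine Finset.mem_filter.mpr ⟨Finset.mem_univ _, fun a ha => extM_apply_ge hMn σ a ha⟩

lemma pxf_extM (hMn : M ≤ n) (σ : Equiv.Perm (Fin M)) (a : ℕ) (ha : a < M) :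
    pxf n (extM hMn σ) a = ((σ ⟨a, ha⟩ : Fin M) : ℕ) := by
  rw [pxf, dif_pos (lt_of_lt_of_le ha hMn), extM_apply_lt hMn σ _ ha]

lemma extM_injective (hMn : M ≤ n) : Function.Injective (extM hMn) := fun σ τ h => by
  ext k
  have h1 : extM hMn σ ⟨(k : ℕ), lt_of_lt_of_le k.2 hMn⟩ =
      extM hMn τ ⟨(k : ℕ), lt_of_lt_of_le k.2 hMn⟩ := by rw [h]
  rw [extM_apply_lt hMn σ ⟨(k : ℕ), lt_of_lt_of_le k.2 hMn⟩ k.2,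
    extM_apply_lt hMn τ ⟨(k : ℕ), lt_of_lt_of_le k.2 hMn⟩ k.2] at h1
  simpa using congrArg Fin.val h1

lemma QMset_eq_image (hMn : M ≤ n) :
    QMset n M = Finset.univ.image (extM hMn) := by
  ext π
  simp only [Finset.mem_image, Finset.mem_univ, true_and]
  constructor
  · intro hπ
    have hfix : ∀ a : Fin n, M ≤ (a : ℕ) → π a = a := (Finset.mem_filter.mp hπ).2
    have hstab : ∀ a : Fin n, (a : ℕ) < M ↔ ((π a : Fin n) : ℕ) < M := by
      intro a
      constructor
      · intro ha
        by_contra hge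
        have h1 : π (π a) = π a := hfix _ (by omega)
        have h2 : π a = a := π.injective h1
        omega
      · intro ha
        by_contra hge
        have := hfix a (by omega)
        omega
    refine ⟨(eMn hMn).symm.permCongr (π.subtypePerm (fun a => (hstab a).symm)), ?_⟩
    ext a
    by_cases ha : (a : ℕ) < M
    · rw [extM_apply_lt _ _ _ ha]
      have : ((eMn hMn).symm.permCongr (π.subtypePerm (fun a => (hstab a).symm))) ⟨(a : ℕ), ha⟩ =
          (eMn hMn).symm ((π.subtypePerm (fun a => (hstab a).symm)) ((eMn hMn) ⟨(a : ℕ), ha⟩)) := by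
        rw [Equiv.permCongr_apply]
        congr 1
      rw [this]
      rfl
    · rw [extM_apply_ge _ _ _ (by omega), hfix a (by omega)]
  · rintro ⟨σ, rfl⟩
    exact extM_mem hMn σ

lemma sum_QMset (hMn : M ≤ n) (f : Equiv.Perm (Fin n) → ℂ) :
    ∑ π ∈ QMset n M, f π = ∑ σ : Equiv.Perm (Fin M), f (extM hMn σ) := by
  rw [QMset_eq_image hMn, Finset.sum_image fun σ _ τ _ h => extM_injective hMn h]

lemma prod_ite_lt (f : ℕ → ℂ) (a K : ℕ) (h : a ≤ K) :
    ∏ c ∈ Finset.range K, (if c < a then f c else 1) = ∏ c ∈ Finset.range a, f c := by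
  rw [← Finset.prod_filter]
  congr 1
  ext c
  simp only [Finset.mem_filter, Finset.mem_range]
  omega

lemma baseQ_extM (hMn : M ≤ n) (hMK : M ≤ K) (x y : ℕ → ℂ) (σ : Equiv.Perm (Fin M)) :
    baseQ n M K x y (extM hMn σ) = bs (fun k : Fin M => x (k : ℕ)) y σ := by
  rw [baseQ, bs, ← Fin.prod_univ_eq_prod_range]
  refine Finset.prod_congr rfl fun a _ => ?_
  congr 1
  · rw [prod_ite_lt _ _ _ (le_trans (le_of_lt a.2) hMK), pxf_extM hMn σ _ a.2, Pc,
      Polynomial.eval_prod]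
    refine Finset.prod_congr rfl fun c _ => ?_
    simp
  · rw [← Fin.prod_univ_eq_prod_range]
    refine Finset.prod_congr rfl fun b _ => ?_
    rw [pxf_extM hMn σ _ a.2, pxf_extM hMn σ _ b.2]
    congr 1

lemma Vd_ne (hMn : M ≤ n) (x : ℕ → ℂ)
    (hx : ∀ a b : ℕ, a < M → b < M → a ≠ b → x a ≠ x b) :
    Vd (fun k : Fin M => x (k : ℕ)) ≠ 0 := by
  rw [Vd]
  refine Finset.prod_ne_zero_iff.mpr fun a _ => Finset.prod_ne_zero_iff.mpr fun b hb => ?_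
  refine sub_ne_zero.mpr (hx _ _ b.2 a.2 ?_)
  intro h
  exact absurd (Fin.ext h : b = a) (ne_of_gt (Finset.mem_Ioi.mp hb))

variable (x y : ℕ → ℂ)

lemma qcoreA (hMn : M ≤ n) (hMK : M ≤ K)
    (hx : ∀ a b : ℕ, a < M → b < M → a ≠ b → x a ≠ x b) :
    ∑ π ∈ QMset n M, baseQ n M K x y π = 1 := by
  rw [sum_QMset hMn, Finset.sum_congr rfl fun σ _ => baseQ_extM hMn hMK x y σ]
  exact sum_bs _ y (Vd_ne hMn x hx)

lemma qcoreB (hMn : M ≤ n) (hMK : M ≤ K)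
    (hx : ∀ a b : ℕ, a < M → b < M → a ≠ b → x a ≠ x b) (c0 : ℕ) (hc0 : c0 + 1 < M) :
    ∑ π ∈ QMset n M, baseQ n M K x y π * x (pxf n π c0) = y c0 := by
  rw [sum_QMset hMn]
  have h1 : ∀ σ : Equiv.Perm (Fin M),
      baseQ n M K x y (extM hMn σ) * x (pxf n (extM hMn σ) c0) =
      bs (fun k : Fin M => x (k : ℕ)) y σ *
        (fun k : Fin M => x (k : ℕ)) (σ ⟨c0, by omega⟩) := by
    intro σ
    rw [baseQ_extM hMn hMK x y σ, pxf_extM hMn σ c0 (by omega)]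
  rw [Finset.sum_congr rfl fun σ _ => h1 σ]
  exact coreB' _ y (Vd_ne hMn x hx) ⟨c0, by omega⟩ (by simpa using hc0)

lemma qcoreD (hMn : M ≤ n) (hMK : M ≤ K)
    (hx : ∀ a b : ℕ, a < M → b < M → a ≠ b → x a ≠ x b) (hM : 0 < M) :
    ∑ π ∈ QMset n M, baseQ n M K x y π * (x (pxf n π (M - 1)) - y (M - 1)) =
      (∑ a ∈ Finset.range M, x a) - ∑ c ∈ Finset.range M, y c := by
  rw [sum_QMset hMn]
  have h1 : ∀ σ : Equiv.Perm (Fin M),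
      baseQ n M K x y (extM hMn σ) * (x (pxf n (extM hMn σ) (M - 1)) - y (M - 1)) =
      bs (fun k : Fin M => x (k : ℕ)) y σ *
        ((fun k : Fin M => x (k : ℕ)) (σ ⟨M - 1, by omega⟩) - y (M - 1)) := by
    intro σ
    rw [baseQ_extM hMn hMK x y σ, pxf_extM hMn σ (M - 1) (by omega)]
  rw [Finset.sum_congr rfl fun σ _ => h1 σ,
    coreD' (fun k : Fin M => x (k : ℕ)) y (Vd_ne hMn x hx) hM,
    Fin.sum_univ_eq_sum_range (fun a => x a) M]

end Transport


noncomputable section Chain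

variable {P : Type*} [DecidableEq P] [Fintype P]

lemma sum_piFinset_cons (L : ℕ) (Q : Fin (L + 1) → Finset P) (f : (Fin (L + 1) → P) → ℂ) :
    ∑ σ ∈ Fintype.piFinset Q, f σ =
      ∑ π ∈ Q 0, ∑ τ ∈ Fintype.piFinset (fun k : Fin L => Q k.succ), f (Fin.cons π τ) := by
  rw [← Finset.sum_product']
  refine (Finset.sum_nbij' (fun p => Fin.cons p.1 p.2) (fun σ => (σ 0, Fin.tail σ))
    ?_ ?_ ?_ ?_ ?_).symm
  · intro p hp
    rw [Finset.mem_product] at hp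
    rw [Fintype.mem_piFinset]
    intro k
    induction k using Fin.cases with
    | zero => simpa using hp.1
    | succ k => simpa using Fintype.mem_piFinset.mp hp.2 k
  · intro σ hσ
    rw [Finset.mem_product]
    exact ⟨Fintype.mem_piFinset.mp hσ 0,
      Fintype.mem_piFinset.mpr fun k => Fintype.mem_piFinset.mp hσ k.succ⟩
  · intro p _
    simp [Fin.tail_cons]
  · intro σ _
    exact Fin.cons_self_tail σ
  · intro p _
    rfl

lemma chain_sum :
    ∀ (L : ℕ) (Q : ℕ → Finset P) (F : ℕ → P → P → ℂ) (g : ℕ → P → ℂ) (φ : P → ℂ),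
    (∀ k, k < L → ∀ ρ ∈ Q (k + 1), ∑ π ∈ Q k, g k π * F k π ρ = g (k + 1) ρ) →
    ∑ σ ∈ Fintype.piFinset (fun k : Fin (L + 1) => Q (k : ℕ)),
      (g 0 (σ 0) * ∏ k : Fin L, F (k : ℕ) (σ k.castSucc) (σ k.succ)) * φ (σ (Fin.last L)) =
    ∑ ρ ∈ Q L, g L ρ * φ ρ := by
  intro L
  induction L with
  | zero =>
    intro Q F g φ _
    rw [sum_piFinset_cons 0 (fun k : Fin 1 => Q (k : ℕ))]
    refine Finset.sum_congr rfl fun π _ => ?_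
    have huniq : ∀ τ : Fin 0 → P, τ = finZeroElim := fun τ => funext fun k => k.elim0
    have hmem : finZeroElim ∈ Fintype.piFinset (fun k : Fin 0 => Q ((k.succ : Fin 1) : ℕ)) :=
      Fintype.mem_piFinset.mpr fun k => k.elim0
    rw [show Fintype.piFinset (fun k : Fin 0 => Q ((k.succ : Fin 1) : ℕ)) = {finZeroElim} from
      Finset.eq_singleton_iff_unique_mem.mpr ⟨hmem, fun τ _ => huniq τ⟩]
    simp
  | succ L ih =>
    intro Q F g φ hstep
    rw [sum_piFinset_cons (L + 1) (fun k : Fin (L + 2) => Q (k : ℕ))]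
    have hpoint : ∀ π, ∀ τ : Fin (L + 1) → P,
        (g 0 ((Fin.cons π τ : Fin (L + 2) → P) 0) *
          ∏ k : Fin (L + 1), F (k : ℕ) ((Fin.cons π τ : Fin (L + 2) → P) k.castSucc)
            ((Fin.cons π τ : Fin (L + 2) → P) k.succ)) *
          φ ((Fin.cons π τ : Fin (L + 2) → P) (Fin.last (L + 1))) =
        (g 0 π * F 0 π (τ 0)) *
          ((∏ k : Fin L, F ((k : ℕ) + 1) (τ k.castSucc) (τ k.succ)) * φ (τ (Fin.last L))) := by
      intro π τ
      have e2 : ∀ k : Fin L, (Fin.cons π τ : Fin (L + 2) → P) (k.succ.castSucc) =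
          τ k.castSucc := by
        intro k
        rw [← Fin.succ_castSucc]
        simp
      have e3 : ∀ k : Fin L, (Fin.cons π τ : Fin (L + 2) → P) (k.succ.succ) = τ k.succ := by
        intro k; simp
      have e4 : (Fin.cons π τ : Fin (L + 2) → P) (Fin.last (L + 1)) = τ (Fin.last L) := by
        have h5 : Fin.last (L + 1) = (Fin.last L).succ := by
          ext; simp
        rw [h5]
        simp only [Fin.cons_succ]
      rw [Fin.prod_univ_succ, e4, Fin.cons_zero,
        Finset.prod_congr rfl fun k (_ : k ∈ Finset.univ) => by rw [e2 k, e3 k]]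
      have e0 : (Fin.cons π τ : Fin (L + 2) → P) ((0 : Fin (L + 1)).castSucc) = π := rfl
      have e1 : (Fin.cons π τ : Fin (L + 2) → P) ((0 : Fin (L + 1)).succ) = τ 0 := by simp
      rw [e0, e1]
      simp only [Fin.val_succ, Fin.val_zero]
      ring
    rw [Finset.sum_congr rfl fun π _ => Finset.sum_congr rfl fun τ _ => hpoint π τ,
      Finset.sum_comm]
    have hinner : ∀ τ ∈ Fintype.piFinset
        (fun k : Fin (L + 1) => Q (((k.succ : Fin (L + 2)) : ℕ))),
        ∑ π ∈ Q 0, (g 0 π * F 0 π (τ 0)) *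
          ((∏ k : Fin L, F ((k : ℕ) + 1) (τ k.castSucc) (τ k.succ)) * φ (τ (Fin.last L))) =
        (g 1 (τ 0) * ∏ k : Fin L, F ((k : ℕ) + 1) (τ k.castSucc) (τ k.succ)) *
          φ (τ (Fin.last L)) := by
      intro τ hτ
      rw [← Finset.sum_mul, hstep 0 (by omega) (τ 0) (Fintype.mem_piFinset.mp hτ 0)]
      ring
    simp only [Fin.val_zero]
    rw [Finset.sum_congr rfl hinner]
    exact ih (fun k => Q (k + 1)) (fun k => F (k + 1)) (fun k => g (k + 1)) φ
      (fun k hk ρ hρ => hstep (k + 1) (by omega) ρ hρ)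

end Chain



noncomputable section Comb

variable (N n : ℕ) (lam : Fin N → ℕ)

lemma Lam_zero : Lam N lam 0 = 0 := by
  rw [Lam]
  have : Finset.univ.filter (fun k : Fin N => (k : ℕ) < 0) = ∅ := by
    ext k; simp
  rw [this, Finset.sum_empty]

lemma Lam_mono {j j' : ℕ} (h : j ≤ j') : Lam N lam j ≤ Lam N lam j' := by
  apply Finset.sum_le_sum_of_subset
  intro k hk
  simp only [Finset.mem_filter, Finset.mem_univ, true_and] at hk ⊢
  omega

lemma Lam_succ {j : ℕ} (hj : j < N) :
    Lam N lam (j + 1) = Lam N lam j + lam ⟨j, hj⟩ := by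
  rw [Lam, Lam]
  have h1 : Finset.univ.filter (fun k : Fin N => (k : ℕ) < j + 1) =
      insert ⟨j, hj⟩ (Finset.univ.filter (fun k : Fin N => (k : ℕ) < j)) := by
    ext k
    simp only [Finset.mem_filter, Finset.mem_univ, true_and, Finset.mem_insert, Fin.ext_iff]
    omega
  rw [h1, Finset.sum_insert (by simp)]
  omega

lemma Lam_N_eq (hlam : ∑ j, lam j = n) : Lam N lam N = n := by
  rw [Lam, ← hlam]
  apply Finset.sum_congr _ fun _ _ => rfl
  apply Finset.filter_true_of_mem
  intro k _
  exact k.2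

lemma Lam_le_n (hlam : ∑ j, lam j = n) {j : ℕ} (hj : j ≤ N) : Lam N lam j ≤ n :=
  (Lam_mono N lam hj).trans (le_of_eq (Lam_N_eq N n lam hlam))

lemma exists_block {j : ℕ} (hj : j ≤ N) (a : ℕ) (ha : a < Lam N lam j) :
    ∃ k : Fin N, (k : ℕ) < j ∧ Lam N lam (k : ℕ) ≤ a ∧ a < Lam N lam ((k : ℕ) + 1) := by
  induction j with
  | zero => rw [Lam_zero] at ha; omega
  | succ j ih =>
    by_cases h : a < Lam N lam j
    · obtain ⟨k, hk1, hk2, hk3⟩ := ih (by omega) h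
      exact ⟨k, by omega, hk2, hk3⟩
    · refine ⟨⟨j, by omega⟩, by simp, ?_, ?_⟩
      · simpa using (by omega : Lam N lam j ≤ a)
      · simpa using ha

lemma mem_IminF_iff {k : Fin N} {a : Fin n} :
    a ∈ IminF N n lam k ↔ Lam N lam (k : ℕ) ≤ (a : ℕ) ∧ (a : ℕ) < Lam N lam ((k : ℕ) + 1) := by
  simp only [IminF, Finset.mem_filter, Finset.mem_univ, true_and]

lemma cupI_IminF {j : ℕ} (hj : j ≤ N) :
    cupI N n (IminF N n lam) j =
      Finset.univ.filter fun a : Fin n => (a : ℕ) < Lam N lam j := by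
  ext a
  simp only [cupI, Finset.mem_biUnion, Finset.mem_filter, Finset.mem_univ, true_and]
  constructor
  · rintro ⟨k, hk, hak⟩
    rw [mem_IminF_iff] at hak
    have hkj : (k : ℕ) < j := by simpa using hk
    have := Lam_mono N lam (show (k : ℕ) + 1 ≤ j by omega)
    omega
  · intro ha
    obtain ⟨k, hk1, hk2, hk3⟩ := exists_block N lam hj (a : ℕ) ha
    exact ⟨k, by simp [hk1], (mem_IminF_iff N n lam).mpr ⟨hk2, hk3⟩⟩

lemma cupI_image {j : ℕ} (J : Fin N → Finset (Fin n)) (f : Fin n → Fin n) :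
    cupI N n (fun mm => (J mm).image f) j = (cupI N n J j).image f := by
  rw [cupI, cupI, Finset.biUnion_image]

lemma mem_image_swap (s : Finset (Fin n)) (p q b : Fin n) :
    b ∈ s.image (Equiv.swap p q) ↔ Equiv.swap p q b ∈ s := by
  rw [Finset.mem_image]
  constructor
  · rintro ⟨a, ha, rfl⟩
    rwa [Equiv.swap_apply_self]
  · intro h
    exact ⟨_, h, Equiv.swap_apply_self _ _ _⟩

lemma sorted_map_val (s : Finset (Fin n)) (l : List ℕ) (hl : l.Pairwise (· ≤ ·))
    (hln : l.Nodup) (hmem : ∀ x : ℕ, x ∈ l ↔ ∃ a ∈ s, (a : ℕ) = x) :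
    (s.sort (· ≤ ·)).map Fin.val = l := by
  refine (fun hp hs => List.Perm.eq_of_pairwise' hs hl hp) ?_ ?_
  · refine List.perm_of_nodup_nodup_toFinset_eq ((s.sort_nodup _).map Fin.val_injective) hln ?_
    ext x
    simp only [List.mem_toFinset, List.mem_map, Finset.mem_sort]
    rw [hmem]
  · exact List.Pairwise.map _ (fun a b (h : a ≤ b) => (h : a ≤ b)) (Finset.pairwise_sort s _)

lemma getD_range {L a : ℕ} (ha : a < L) : (List.range L).getD a 0 = a := by
  rw [List.getD_eq_getElem _ _ (by simpa using ha)]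
  simp

end Comb


noncomputable section SwapPart

variable (N n : ℕ) (lam : Fin N → ℕ) (i : ℕ)

lemma swap_val (p q b : Fin n) :
    ((Equiv.swap p q b : Fin n) : ℕ) =
      if (b : ℕ) = (p : ℕ) then (q : ℕ) else if (b : ℕ) = (q : ℕ) then (p : ℕ) else (b : ℕ) := by
  by_cases hbp : b = p
  · subst hbp
    rw [Equiv.swap_apply_left, if_pos rfl]
  · by_cases hbq : b = q
    · subst hbq
      rw [Equiv.swap_apply_right, if_neg (fun h => hbp (Fin.ext h)), if_pos rfl]
    · rw [Equiv.swap_apply_of_ne_of_ne hbp hbq, if_neg (fun h => hbp (Fin.ext h)),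
        if_neg (fun h => hbq (Fin.ext h))]

lemma cupI_Iswap (p q : Fin n) (hp : (p : ℕ) = Lam N lam i - 1) (hq : (q : ℕ) = Lam N lam i)
    (hLi : 1 ≤ Lam N lam i) {j : ℕ} (hj : j ≤ N) :
    cupI N n (fun mm => (IminF N n lam mm).image (Equiv.swap p q)) j =
      if Lam N lam j = Lam N lam i then
        insert q (Finset.univ.filter fun a : Fin n => (a : ℕ) < Lam N lam i - 1)
      else Finset.univ.filter fun a : Fin n => (a : ℕ) < Lam N lam j := by
  rw [cupI_image, cupI_IminF N n lam hj]
  ext b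
  rw [mem_image_swap]
  have hswap := swap_val n p q b
  by_cases h : Lam N lam j = Lam N lam i
  · rw [if_pos h]
    simp only [Finset.mem_filter, Finset.mem_univ, true_and, Finset.mem_insert, Fin.ext_iff]
    split_ifs at hswap <;> omega
  · rw [if_neg h]
    simp only [Finset.mem_filter, Finset.mem_univ, true_and]
    split_ifs at hswap <;> omega

lemma idx_Iswap (hlam : ∑ j, lam j = n)
    (p q : Fin n) (hp : (p : ℕ) = Lam N lam i - 1) (hq : (q : ℕ) = Lam N lam i)
    (hLi : 1 ≤ Lam N lam i) {j a : ℕ} (hj : j ≤ N) (ha : a < Lam N lam j) :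
    idx N n (fun mm => (IminF N n lam mm).image (Equiv.swap p q)) j a =
      if Lam N lam j = Lam N lam i ∧ a = Lam N lam i - 1 then Lam N lam i else a := by
  have hjn : Lam N lam j ≤ n := Lam_le_n N n lam hlam hj
  rw [idx, cupI_Iswap N n lam i p q hp hq hLi hj]
  by_cases h : Lam N lam j = Lam N lam i
  · rw [if_pos h]
    have hsort : (((insert q (Finset.univ.filter
        fun a : Fin n => (a : ℕ) < Lam N lam i - 1)).sort (· ≤ ·)).map Fin.val) =
        List.range (Lam N lam i - 1) ++ [Lam N lam i] := by
      apply sorted_map_val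
      · rw [List.pairwise_append]
        refine ⟨List.pairwise_le_range, List.pairwise_singleton _ _, ?_⟩
        intro x hx b hb
        simp only [List.mem_range] at hx
        simp only [List.mem_singleton] at hb
        omega
      · rw [List.nodup_append]
        refine ⟨List.nodup_range, List.nodup_singleton _, ?_⟩
        intro x hx b hb
        simp only [List.mem_range] at hx
        simp only [List.mem_singleton] at hb
        omega
      · intro x
        simp only [List.mem_append, List.mem_range, List.mem_singleton, Finset.mem_insert,
          Finset.mem_filter, Finset.mem_univ, true_and]
        constructor
        · rintro (hx | rfl)
          · exact ⟨⟨x, by omega⟩, Or.inr (by simpa using hx), rfl⟩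
          · exact ⟨q, Or.inl rfl, hq⟩
        · rintro ⟨c, hc | hc, rfl⟩
          · subst hc; right; exact hq
          · left; exact hc
    rw [hsort]
    by_cases ham : a = Lam N lam i - 1
    · rw [if_pos ⟨h, ham⟩, List.getD_eq_getElem _ _ (by simp; omega)]
      rw [List.getElem_append_right (by simp; omega)]
      simp [ham]
    · rw [if_neg (by tauto), List.getD_eq_getElem _ _ (by simp; omega)]
      rw [List.getElem_append_left (by simp; omega)]
      simp
  · rw [if_neg h, if_neg (by tauto)]
    have hsort : (((Finset.univ.filter
        fun b : Fin n => (b : ℕ) < Lam N lam j).sort (· ≤ ·)).map Fin.val) =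
        List.range (Lam N lam j) := by
      apply sorted_map_val
      · exact List.pairwise_le_range
      · exact List.nodup_range
      · intro x
        simp only [List.mem_range, Finset.mem_filter, Finset.mem_univ, true_and]
        constructor
        · intro hx
          exact ⟨⟨x, by omega⟩, by simpa using hx, rfl⟩
        · rintro ⟨c, hc, rfl⟩
          exact hc
    rw [hsort, getD_range ha]

end SwapPart


noncomputable section Glue

/-- Value of the level-`j` variables with slots permuted by `ρ` (level `N` is `z`). -/
def tpf (N n : ℕ) (t : ℕ → ℕ → ℂ) (z : Fin n → ℂ) (j : ℕ) (ρ : Equiv.Perm (Fin n)) (c : ℕ) :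
    ℂ :=
  if j = N then zf n z c else t j (pxf n ρ c)

/-- The group-`(k+1)` factor of `U°` for the swapped minimal partition. -/
def Ff (N n : ℕ) (lam : Fin N → ℕ) (i : ℕ) (t : ℕ → ℕ → ℂ) (z : Fin n → ℂ) (k : ℕ)
    (π ρ : Equiv.Perm (Fin n)) : ℂ :=
  ∏ a ∈ Finset.range (Lam N lam (k + 1)),
    ((∏ c ∈ Finset.range (Lam N lam (k + 2)),
        if c < a ∨ (k + 1 = i ∧ a = Lam N lam i - 1 ∧ c = Lam N lam i - 1) then
          tpf N n t z (k + 1) π a - tpf N n t z (k + 2) ρ c else 1) *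
      ∏ b ∈ Finset.range (Lam N lam (k + 1)),
        if a < b then (tpf N n t z (k + 1) π b - tpf N n t z (k + 1) π a)⁻¹ else 1)

/-- The telescoping partial sums. -/
def gf (N n : ℕ) (lam : Fin N → ℕ) (i : ℕ) (t : ℕ → ℕ → ℂ) (z : Fin n → ℂ) (k : ℕ)
    (ρ : Equiv.Perm (Fin n)) : ℂ :=
  if k < i then 1
  else (∑ a ∈ Finset.range (Lam N lam i), t i a) -
    ∑ c ∈ Finset.range (Lam N lam i), tpf N n t z (k + 1) ρ c

/-- The `k`-th component set of the symmetrization group. -/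
def Qfs (N n : ℕ) (lam : Fin N → ℕ) (k : ℕ) : Finset (Equiv.Perm (Fin n)) :=
  Finset.univ.filter fun π =>
    ∀ a : Fin n, (k + 1 = N ∨ Lam N lam (k + 1) ≤ (a : ℕ)) → π a = a

lemma symSet_eq (N n : ℕ) (lam : Fin N → ℕ) :
    symSet N n lam = Fintype.piFinset (fun k : Fin N => Qfs N n lam (k : ℕ)) := by
  ext σ
  simp only [symSet, Finset.mem_filter, Finset.mem_univ, true_and, Fintype.mem_piFinset, Qfs]

lemma Qfs_eq_QMset (N n : ℕ) (lam : Fin N → ℕ) (k : ℕ) (hk : k + 1 ≠ N) :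
    Qfs N n lam k = QMset n (Lam N lam (k + 1)) := by
  ext π
  simp only [Qfs, QMset, Finset.mem_filter, Finset.mem_univ, true_and]
  constructor
  · intro h a ha
    exact h a (Or.inr ha)
  · rintro h a (h1 | h2)
    · exact absurd h1 hk
    · exact h a h2

lemma Qfs_last (N n : ℕ) (lam : Fin N → ℕ) (hN : 1 ≤ N) : Qfs N n lam (N - 1) = {1} := by
  ext π
  simp only [Qfs, Finset.mem_filter, Finset.mem_univ, true_and, Finset.mem_singleton]
  constructor
  · intro h
    exact Equiv.ext fun a => h a (Or.inl (by omega))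
  · rintro rfl a _
    rfl

lemma TT_permT (N n : ℕ) (t : ℕ → ℕ → ℂ) (z : Fin n → ℂ) (σ : Fin N → Equiv.Perm (Fin n))
    {j : ℕ} (hj1 : 1 ≤ j) (hj : j ≤ N) (κ : Fin N) (hκ : (κ : ℕ) = j - 1) (aa : ℕ) :
    TT N n (permT N n σ t) z j aa = tpf N n t z j (σ κ) aa := by
  rw [TT, tpf]
  by_cases hN : j = N
  · rw [if_pos hN, if_pos hN]
  · rw [if_neg hN, if_neg hN, permT, pxf]
    by_cases han : aa < n
    · rw [dif_pos ⟨hj1, by omega, han⟩, dif_pos han]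
      have h5 : ∀ κ' : Fin N, (κ' : ℕ) = j - 1 → ∀ h6,
          t j ((σ κ' ⟨aa, han⟩ : Fin n) : ℕ) = t j ((σ ⟨j - 1, h6⟩ ⟨aa, han⟩ : Fin n) : ℕ) := by
        intro κ' hκ' h6
        rw [show κ' = (⟨j - 1, h6⟩ : Fin N) from Fin.ext hκ']
      exact (h5 κ hκ _).symm
    · rw [dif_neg (by tauto), dif_neg han]

end Glue

set_option maxHeartbeats 1600000 in
/-- For `i ∈ {1,…,N−1}` with `λ^{(i)} ≥ 1` and `λ_{i+1} ≥ 1`, and the transposition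
`s = s_{λ^{(i)}, λ^{(i)}+1}` of the positions `λ^{(i)}` and `λ^{(i)}+1` (1-indexed; in the
0-indexed encoding these are the positions `λ^{(i)} − 1` and `λ^{(i)}`),
`W°_{s(I^min)}(t;z) = Σ_{j=1}^{λ^{(i)}} (t^{(i)}_j − z_j)`; an identity of polynomials, stated
at all points where the cancelling denominators do not vanish.  The hypothesis
`hLn : λ^{(i)} < n` is a consequence of `λ_{i+1} ≥ 1` and `λ_1 + ⋯ + λ_N = n`. -/
theorem limiting_weight_function_simple_transposition
    (N n : ℕ) (hN : 1 ≤ N) (hn : 1 ≤ n) (lam : Fin N → ℕ) (hlam : ∑ j, lam j = n)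
    (i : ℕ) (hi1 : 1 ≤ i) (hi2 : i ≤ N - 1) (hiN : i < N)
    (hLi : 1 ≤ Lam N lam i) (hlami : 1 ≤ lam ⟨i, hiN⟩) (hLn : Lam N lam i < n)
    (t : ℕ → ℕ → ℂ) (z : Fin n → ℂ) (ht : tDistinct N n lam t) :
    Wcirc N n lam
        (fun m => (IminF N n lam m).image
          (Equiv.swap ⟨Lam N lam i - 1, by omega⟩ ⟨Lam N lam i, hLn⟩)) t z =
      ∑ a ∈ Finset.range (Lam N lam i), (t i a - zf n z a) := by
  obtain ⟨L, rfl⟩ : ∃ L, N = L + 1 := ⟨N - 1, by omega⟩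
  have hiL : i ≤ L := by omega
  have key : ∀ p q : Fin n, (p : ℕ) = Lam (L + 1) lam i - 1 → (q : ℕ) = Lam (L + 1) lam i →
      Wcirc (L + 1) n lam (fun mm => (IminF (L + 1) n lam mm).image (Equiv.swap p q)) t z =
      ∑ a ∈ Finset.range (Lam (L + 1) lam i), (t i a - zf n z a) := by
    intro p q hpv hqv
    have hisucc : Lam (L + 1) lam i < Lam (L + 1) lam (i + 1) := by
      rw [Lam_succ (L + 1) lam hiN]
      omega
    have hmono : ∀ j j' : ℕ, j ≤ j' → Lam (L + 1) lam j ≤ Lam (L + 1) lam j' :=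
      fun _ _ h => Lam_mono (L + 1) lam h
    have hlen : ∀ j : ℕ, j ≤ L + 1 → Lam (L + 1) lam j ≤ n :=
      fun _ hj => Lam_le_n (L + 1) n lam hlam hj
    have hidx : ∀ j a : ℕ, j ≤ L + 1 → a < Lam (L + 1) lam j →
        idx (L + 1) n (fun mm => (IminF (L + 1) n lam mm).image (Equiv.swap p q)) j a =
        if Lam (L + 1) lam j = Lam (L + 1) lam i ∧ a = Lam (L + 1) lam i - 1 then
          Lam (L + 1) lam i else a :=
      fun j a hj ha => idx_Iswap (L + 1) n lam i hlam p q hpv hqv hLi hj ha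
    have hcond : ∀ j a c : ℕ, 1 ≤ j → j ≤ L → a < Lam (L + 1) lam j →
        c < Lam (L + 1) lam (j + 1) →
        ((idx (L + 1) n (fun mm => (IminF (L + 1) n lam mm).image (Equiv.swap p q)) (j + 1) c <
          idx (L + 1) n (fun mm => (IminF (L + 1) n lam mm).image (Equiv.swap p q)) j a) ↔
          (c < a ∨ (j = i ∧ a = Lam (L + 1) lam i - 1 ∧ c = Lam (L + 1) lam i - 1))) := by
      intro j a c hj1 hjL ha hc
      rw [hidx j a (by omega) ha, hidx (j + 1) c (by omega) hc]
      have h1 := hmono j (j + 1) (by omega)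
      rcases lt_trichotomy j i with hji | hji | hji
      · have h2 := hmono (j + 1) i (by omega)
        split_ifs <;> omega
      · subst hji
        split_ifs <;> omega
      · have h2 := hmono (i + 1) j (by omega)
        split_ifs <;> omega
    have hstep : ∀ k, k < L → ∀ ρ ∈ Qfs (L + 1) n lam (k + 1),
        ∑ π ∈ Qfs (L + 1) n lam k,
          gf (L + 1) n lam i t z k π * Ff (L + 1) n lam i t z k π ρ =
        gf (L + 1) n lam i t z (k + 1) ρ := by
      intro k hk ρ _
      have hQk : Qfs (L + 1) n lam k = QMset n (Lam (L + 1) lam (k + 1)) :=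
        Qfs_eq_QMset (L + 1) n lam k (by omega)
      have hMn : Lam (L + 1) lam (k + 1) ≤ n := hlen (k + 1) (by omega)
      have hMK : Lam (L + 1) lam (k + 1) ≤ Lam (L + 1) lam (k + 2) := hmono _ _ (by omega)
      have hx : ∀ a b : ℕ, a < Lam (L + 1) lam (k + 1) → b < Lam (L + 1) lam (k + 1) →
          a ≠ b → t (k + 1) a ≠ t (k + 1) b :=
        fun a b ha hb hab => ht (k + 1) (by omega) (by omega) a b ha hb hab
      have htp : ∀ (π : Equiv.Perm (Fin n)) (aa : ℕ),
          tpf (L + 1) n t z (k + 1) π aa = t (k + 1) (pxf n π aa) :=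
        fun π aa => if_neg (by omega)
      by_cases hki : k + 1 = i
      · subst hki
        have hm1 : 1 ≤ Lam (L + 1) lam (k + 1) := hLi
        have hFf : ∀ π : Equiv.Perm (Fin n), Ff (L + 1) n lam (k + 1) t z k π ρ =
            baseQ n (Lam (L + 1) lam (k + 1)) (Lam (L + 1) lam (k + 2))
              (fun a => t (k + 1) a) (fun c => tpf (L + 1) n t z (k + 2) ρ c) π *
            ((fun a => t (k + 1) a) (pxf n π (Lam (L + 1) lam (k + 1) - 1)) -
              (fun c => tpf (L + 1) n t z (k + 2) ρ c) (Lam (L + 1) lam (k + 1) - 1)) := by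
          intro π
          rw [Ff, baseQ]
          have hstep1 : ∀ a ∈ Finset.range (Lam (L + 1) lam (k + 1)),
              ((∏ c ∈ Finset.range (Lam (L + 1) lam (k + 2)),
                if c < a ∨ (k + 1 = k + 1 ∧ a = Lam (L + 1) lam (k + 1) - 1 ∧
                    c = Lam (L + 1) lam (k + 1) - 1) then
                  tpf (L + 1) n t z (k + 1) π a - tpf (L + 1) n t z (k + 2) ρ c else 1) *
                ∏ b ∈ Finset.range (Lam (L + 1) lam (k + 1)),
                  if a < b then
                    (tpf (L + 1) n t z (k + 1) π b - tpf (L + 1) n t z (k + 1) π a)⁻¹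
                  else 1) =
              (((∏ c ∈ Finset.range (Lam (L + 1) lam (k + 2)),
                if c < a then
                  t (k + 1) (pxf n π a) - tpf (L + 1) n t z (k + 2) ρ c else 1) *
                ∏ b ∈ Finset.range (Lam (L + 1) lam (k + 1)),
                  if a < b then
                    (t (k + 1) (pxf n π b) - t (k + 1) (pxf n π a))⁻¹ else 1) *
                (if a = Lam (L + 1) lam (k + 1) - 1 then
                  t (k + 1) (pxf n π a) - tpf (L + 1) n t z (k + 2)
                    ρ (Lam (L + 1) lam (k + 1) - 1) else 1)) := by
            intro a ha
            rw [Finset.mem_range] at ha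
            simp only [htp]
            by_cases ham : a = Lam (L + 1) lam (k + 1) - 1
            · rw [if_pos ham]
              have hcnd : ∀ c : ℕ, (c < a ∨ (True ∧ a = Lam (L + 1) lam (k + 1) - 1 ∧
                  c = Lam (L + 1) lam (k + 1) - 1)) ↔ c < Lam (L + 1) lam (k + 1) := by
                intro c; simp only [true_and]; omega
              rw [Finset.prod_congr rfl fun c _ => if_congr (hcnd c) rfl rfl,
                prod_ite_lt _ _ _ hMK]
              have hm2 : Lam (L + 1) lam (k + 1) = (Lam (L + 1) lam (k + 1) - 1) + 1 := by omega
              rw [hm2, Finset.prod_range_succ, ← hm2,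
                ← prod_ite_lt (fun c => t (k + 1) (pxf n π a) - tpf (L + 1) n t z (k + 2) ρ c)
                  (Lam (L + 1) lam (k + 1) - 1) (Lam (L + 1) lam (k + 2)) (by omega)]
              have hca : ∀ c : ℕ, (c < Lam (L + 1) lam (k + 1) - 1) ↔ c < a := by
                intro c; omega
              rw [Finset.prod_congr rfl fun c _ => if_congr (hca c) rfl rfl, ham]
              ring
            · rw [if_neg ham, mul_one]
              have hcnd : ∀ c : ℕ, (c < a ∨ (True ∧ a = Lam (L + 1) lam (k + 1) - 1 ∧
                  c = Lam (L + 1) lam (k + 1) - 1)) ↔ c < a := by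
                intro c; simp only [true_and]; omega
              rw [Finset.prod_congr rfl fun c _ => if_congr (hcnd c) rfl rfl]
          rw [Finset.prod_congr rfl hstep1, Finset.prod_mul_distrib,
            Finset.prod_ite_eq' (Finset.range (Lam (L + 1) lam (k + 1)))
              (Lam (L + 1) lam (k + 1) - 1)
              (fun a => t (k + 1) (pxf n π a) - tpf (L + 1) n t z (k + 2)
                ρ (Lam (L + 1) lam (k + 1) - 1)),
            if_pos (Finset.mem_range.mpr (by omega))]
        rw [hQk, Finset.sum_congr rfl fun π _ => by
          rw [hFf π, show gf (L + 1) n lam (k + 1) t z k π = 1 from if_pos (by omega), one_mul]]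
        rw [qcoreD (fun a => t (k + 1) a) (fun c => tpf (L + 1) n t z (k + 2) ρ c)
          hMn hMK hx (by omega), gf, if_neg (by omega)]
      · have hFf : ∀ π : Equiv.Perm (Fin n), Ff (L + 1) n lam i t z k π ρ =
            baseQ n (Lam (L + 1) lam (k + 1)) (Lam (L + 1) lam (k + 2))
              (fun a => t (k + 1) a) (fun c => tpf (L + 1) n t z (k + 2) ρ c) π := by
          intro π
          rw [Ff, baseQ]
          refine Finset.prod_congr rfl fun a _ => ?_
          simp only [htp]
          congr 1
          refine Finset.prod_congr rfl fun c _ => ?_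
          exact if_congr (by omega) rfl rfl
        by_cases hki' : k + 1 < i
        · rw [hQk, Finset.sum_congr rfl fun π _ => by
            rw [hFf π, show gf (L + 1) n lam i t z k π = 1 from if_pos (by omega), one_mul],
            qcoreA (fun a => t (k + 1) a) (fun c => tpf (L + 1) n t z (k + 2) ρ c) hMn hMK hx,
            show gf (L + 1) n lam i t z (k + 1) ρ = 1 from if_pos (by omega)]
        · have hmM : Lam (L + 1) lam i < Lam (L + 1) lam (k + 1) :=
            lt_of_lt_of_le hisucc (hmono _ _ (by omega))
          have hgfk : ∀ π : Equiv.Perm (Fin n), gf (L + 1) n lam i t z k π =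
              (∑ a ∈ Finset.range (Lam (L + 1) lam i), t i a) -
              ∑ c ∈ Finset.range (Lam (L + 1) lam i), t (k + 1) (pxf n π c) := by
            intro π
            rw [gf, if_neg (by omega)]
            congr 1
            exact Finset.sum_congr rfl fun c _ => htp π c
          rw [hQk, Finset.sum_congr rfl fun π _ => by rw [hFf π, hgfk π]]
          have hsplit : ∀ π : Equiv.Perm (Fin n),
              ((∑ a ∈ Finset.range (Lam (L + 1) lam i), t i a) -
                ∑ c ∈ Finset.range (Lam (L + 1) lam i), t (k + 1) (pxf n π c)) *
              baseQ n (Lam (L + 1) lam (k + 1)) (Lam (L + 1) lam (k + 2))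
                (fun a => t (k + 1) a) (fun c => tpf (L + 1) n t z (k + 2) ρ c) π =
              (∑ a ∈ Finset.range (Lam (L + 1) lam i), t i a) *
                baseQ n (Lam (L + 1) lam (k + 1)) (Lam (L + 1) lam (k + 2))
                  (fun a => t (k + 1) a) (fun c => tpf (L + 1) n t z (k + 2) ρ c) π -
              ∑ c ∈ Finset.range (Lam (L + 1) lam i),
                (baseQ n (Lam (L + 1) lam (k + 1)) (Lam (L + 1) lam (k + 2))
                  (fun a => t (k + 1) a) (fun c => tpf (L + 1) n t z (k + 2) ρ c) π *
                  (fun a => t (k + 1) a) (pxf n π c)) := by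
            intro π
            rw [sub_mul, Finset.sum_mul (Finset.range (Lam (L + 1) lam i))
                (fun c => t (k + 1) (pxf n π c))
                (baseQ n (Lam (L + 1) lam (k + 1)) (Lam (L + 1) lam (k + 2))
                  (fun a => t (k + 1) a) (fun c => tpf (L + 1) n t z (k + 2) ρ c) π),
              Finset.sum_congr rfl fun c (_ : c ∈ Finset.range (Lam (L + 1) lam i)) =>
                mul_comm (t (k + 1) (pxf n π c))
                  (baseQ n (Lam (L + 1) lam (k + 1)) (Lam (L + 1) lam (k + 2))
                    (fun a => t (k + 1) a) (fun c => tpf (L + 1) n t z (k + 2) ρ c) π)]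
          rw [Finset.sum_congr rfl fun π _ => hsplit π, Finset.sum_sub_distrib,
            ← Finset.mul_sum,
            qcoreA (fun a => t (k + 1) a) (fun c => tpf (L + 1) n t z (k + 2) ρ c) hMn hMK hx,
            mul_one, Finset.sum_comm]
          rw [Finset.sum_congr rfl fun c hc =>
            qcoreB (fun a => t (k + 1) a) (fun c => tpf (L + 1) n t z (k + 2) ρ c) hMn hMK hx c
              (by rw [Finset.mem_range] at hc; omega)]
          rw [gf, if_neg (by omega)]
    have hU : ∀ σ ∈ Fintype.piFinset (fun k : Fin (L + 1) => Qfs (L + 1) n lam (k : ℕ)),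
        Ucirc (L + 1) n lam (fun mm => (IminF (L + 1) n lam mm).image (Equiv.swap p q))
          (permT (L + 1) n σ t) z =
        (gf (L + 1) n lam i t z 0 (σ 0) *
          ∏ k : Fin L, Ff (L + 1) n lam i t z (k : ℕ) (σ k.castSucc) (σ k.succ)) *
          (fun _ : Equiv.Perm (Fin n) => (1 : ℂ)) (σ (Fin.last L)) := by
      intro σ _
      rw [show gf (L + 1) n lam i t z 0 (σ 0) = 1 from if_pos (by omega), one_mul,
        show (fun _ : Equiv.Perm (Fin n) => (1 : ℂ)) (σ (Fin.last L)) = 1 from rfl, mul_one,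
        Ucirc]
      have hIcc : Finset.Icc 1 (L + 1 - 1) = Finset.Ico 1 (L + 1) := by
        rw [Finset.Ico_add_one_right_eq_Icc]
        simp
      rw [hIcc, Finset.prod_Ico_eq_prod_range]
      simp only [Nat.add_sub_cancel]
      rw [← Fin.prod_univ_eq_prod_range]
      refine Finset.prod_congr rfl fun k _ => ?_
      have hj1k : 1 + (k : ℕ) = (k : ℕ) + 1 := by omega
      rw [hj1k, Ff]
      have hscv : ((k.castSucc : Fin (L + 1)) : ℕ) = (k : ℕ) + 1 - 1 := by simp
      have hssv : ((k.succ : Fin (L + 1)) : ℕ) = (k : ℕ) + 1 + 1 - 1 := by simp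
      refine Finset.prod_congr rfl fun a ha => ?_
      rw [Finset.mem_range] at ha
      congr 1
      · refine Finset.prod_congr rfl fun c hc => ?_
        rw [Finset.mem_range] at hc
        rw [TT_permT (L + 1) n t z σ (by omega) (by omega) k.castSucc hscv a,
          TT_permT (L + 1) n t z σ (by omega) (by omega) k.succ hssv c]
        exact if_congr (hcond ((k : ℕ) + 1) a c (by omega) (by omega) ha hc) rfl rfl
      · refine Finset.prod_congr rfl fun b hb => ?_
        rw [TT_permT (L + 1) n t z σ (by omega) (by omega) k.castSucc hscv b,
          TT_permT (L + 1) n t z σ (by omega) (by omega) k.castSucc hscv a, one_div]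
    rw [Wcirc, symSet_eq, Finset.sum_congr rfl hU,
      chain_sum L (Qfs (L + 1) n lam) (Ff (L + 1) n lam i t z) (gf (L + 1) n lam i t z)
        (fun _ => 1) hstep]
    have hQL : Qfs (L + 1) n lam L = {1} := Qfs_last (L + 1) n lam (by omega)
    rw [hQL, Finset.sum_singleton, mul_one]
    simp only [gf, if_neg (show ¬ L < i by omega)]
    rw [Finset.sum_sub_distrib]
    congr 1
    refine Finset.sum_congr rfl fun c _ => ?_
    rw [tpf, if_pos rfl]
  exact key _ _ rfl rfl
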